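/- Let Y = Σ_{j=1}^K X_jB*_j + E with X_j ∈ ℝ^{n×p_j}, B*_j ∈ ℝ^{p_j×q}, E ∈ ℝ^{n×q}. Fix k, let S_k ∈ ℝ^{n×p_k} be such that both S_kᵀS_k and S_kᵀX_k are invertible, and set P_k = S_k(S_kᵀS_k)⁻¹S_kᵀ. Given any initial estimates B̂_j^n ∈ ℝ^{p_j×q}, define the de-biased estimator B̂_k = B̂_k^n + (S_kᵀX_k)⁻¹S_kᵀ(Y − Σ_{j=1}^K X_jB̂_j^n) and the remainder Rem_k = P_k Σ_{j≠k} X_j(B̂_j^n − B*_j). Then P_kX_k(B̂_k − B*_k) = P_kE − Rem_k. -/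

import Mathlib

open Matrix

noncomputable def frobInner {m n : ℕ} (A B : Matrix (Fin m) (Fin n) ℝ) : ℝ := (Aᵀ * B).trace

noncomputable def frobNorm {m n : ℕ} (A : Matrix (Fin m) (Fin n) ℝ) : ℝ := Real.sqrt (Aᵀ * A).trace

noncomputable def nucNorm {m n : ℕ} (A : Matrix (Fin m) (Fin n) ℝ) : ℝ :=
  (((Matrix.posSemidef_conjTranspose_mul_self A).1.eigenvectorUnitary : Matrix (Fin n) (Fin n) ℝ) *
    Matrix.diagonal ((RCLike.ofReal : ℝ → ℝ) ∘ (Real.sqrt ·) ∘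
      (Matrix.posSemidef_conjTranspose_mul_self A).1.eigenvalues) *
    ((star (Matrix.posSemidef_conjTranspose_mul_self A).1.eigenvectorUnitary :
      unitary (Matrix (Fin n) (Fin n) ℝ)) : Matrix (Fin n) (Fin n) ℝ)).trace

noncomputable def opNorm {m n : ℕ} (A : Matrix (Fin m) (Fin n) ℝ) : ℝ :=
  ‖LinearMap.toContinuousLinearMap (Matrix.toEuclideanLin A)‖

/-! Since `Sᵀ X_k (Sᵀ X_k)⁻¹ Sᵀ = Sᵀ`, the correction term `P_k X_k (Sᵀ X_k)⁻¹ Sᵀ R` equals `P_k R`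
for the residual `R = Y - ∑ⱼ Xⱼ B̂ⱼⁿ`. Writing `R = E - X_k (B̂_kⁿ - B*_k) - ∑_{j ≠ k} Xⱼ (B̂ⱼⁿ - B*ⱼ)`,
its `k`-th block cancels the bias `P_k X_k (B̂_kⁿ - B*_k)` exactly. -/

namespace Matrix

variable {R : Type*} [CommRing R] {l n : Type*} [Fintype l] [DecidableEq l] [Fintype n]

theorem mul_mul_nonsing_inv_mul_cancel (T : Matrix l n R) (X : Matrix n l R)
    (h : IsUnit (T * X)) : T * X * (T * X)⁻¹ * T = T := by
  rw [mul_nonsing_inv _ ((isUnit_iff_isUnit_det _).mp h), Matrix.one_mul]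

end Matrix

section BlockResidual

variable {R : Type*} [Ring R] {ι : Type*} [Fintype ι] [DecidableEq ι]
  {m q : Type*} {p : ι → Type*} [∀ j, Fintype (p j)]

theorem sum_mul_add_sub_sum_mul_eq (X : ∀ j, Matrix m (p j) R) (B B' : ∀ j, Matrix (p j) q R)
    (E : Matrix m q R) (k : ι) :
    (∑ j, X j * B j) + E - ∑ j, X j * B' j =
      E - X k * (B' k - B k) - ∑ j ∈ Finset.univ.erase k, X j * (B' j - B j) := by
  have hsplit : ∑ j, X j * (B' j - B j) =
      X k * (B' k - B k) + ∑ j ∈ Finset.univ.erase k, X j * (B' j - B j) :=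
    (Finset.add_sum_erase _ _ (Finset.mem_univ k)).symm
  simp only [Matrix.mul_sub, Finset.sum_sub_distrib] at hsplit ⊢
  rw [sub_eq_iff_eq_add] at hsplit
  rw [hsplit]
  abel

end BlockResidual

theorem stmt_12_general (n q K : ℕ) (p : Fin K → ℕ) (k : Fin K)
    (X : ∀ j, Matrix (Fin n) (Fin (p j)) ℝ)
    (Bstar Bhatn : ∀ j, Matrix (Fin (p j)) (Fin q) ℝ)
    (E Y : Matrix (Fin n) (Fin q) ℝ)
    (hY : Y = (∑ j, X j * Bstar j) + E)
    (S : Matrix (Fin n) (Fin (p k)) ℝ)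
    (hSX : IsUnit (Sᵀ * X k)) :
    (S * (Sᵀ * S)⁻¹ * Sᵀ) * X k *
        ((Bhatn k + (Sᵀ * X k)⁻¹ * Sᵀ * (Y - ∑ j, X j * Bhatn j)) - Bstar k) =
      (S * (Sᵀ * S)⁻¹ * Sᵀ) * E -
        (S * (Sᵀ * S)⁻¹ * Sᵀ) *
          ∑ j ∈ Finset.univ.erase k, X j * (Bhatn j - Bstar j) := by
  have hscore : S * (Sᵀ * S)⁻¹ * Sᵀ * X k * (Sᵀ * X k)⁻¹ * Sᵀ = S * (Sᵀ * S)⁻¹ * Sᵀ := by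
    simpa only [Matrix.mul_assoc] using
      congrArg (S * (Sᵀ * S)⁻¹ * ·) (mul_mul_nonsing_inv_mul_cancel Sᵀ (X k) hSX)
  set P := S * (Sᵀ * S)⁻¹ * Sᵀ
  calc P * X k * ((Bhatn k + (Sᵀ * X k)⁻¹ * Sᵀ * (Y - ∑ j, X j * Bhatn j)) - Bstar k)
      = P * X k * (Bhatn k - Bstar k) +
          P * X k * (Sᵀ * X k)⁻¹ * Sᵀ * (Y - ∑ j, X j * Bhatn j) := by
        rw [add_sub_right_comm, Matrix.mul_add]
        simp only [Matrix.mul_assoc]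
    _ = P * X k * (Bhatn k - Bstar k) + P * (E - X k * (Bhatn k - Bstar k) -
          ∑ j ∈ Finset.univ.erase k, X j * (Bhatn j - Bstar j)) := by
        rw [hscore, hY, sum_mul_add_sub_sum_mul_eq]
    _ = P * E - P * ∑ j ∈ Finset.univ.erase k, X j * (Bhatn j - Bstar j) := by
        simp only [Matrix.mul_sub, Matrix.mul_assoc]
        abel

/-- Exact algebraic decomposition of the de-biased group effect: with
`Y = ∑ⱼ XⱼB*ⱼ + E`, score matrix `S_k` with `S_kᵀS_k` and `S_kᵀX_k` invertible,
`P_k = S_k(S_kᵀS_k)⁻¹S_kᵀ`, de-biased estimator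
`B̂_k = B̂_k^n + (S_kᵀX_k)⁻¹S_kᵀ(Y − ∑ⱼ XⱼB̂ⱼ^n)` and remainder
`Rem_k = P_k ∑_{j≠k} Xⱼ(B̂ⱼ^n − B*ⱼ)`, one has `P_kX_k(B̂_k − B*_k) = P_kE − Rem_k`. -/
theorem stmt_12 (n q K : ℕ) (p : Fin K → ℕ) (k : Fin K)
    (X : ∀ j, Matrix (Fin n) (Fin (p j)) ℝ)
    (Bstar Bhatn : ∀ j, Matrix (Fin (p j)) (Fin q) ℝ)
    (E Y : Matrix (Fin n) (Fin q) ℝ)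
    (hY : Y = (∑ j, X j * Bstar j) + E)
    (S : Matrix (Fin n) (Fin (p k)) ℝ)
    (hSS : IsUnit (Sᵀ * S)) (hSX : IsUnit (Sᵀ * X k)) :
    (S * (Sᵀ * S)⁻¹ * Sᵀ) * X k *
        ((Bhatn k + (Sᵀ * X k)⁻¹ * Sᵀ * (Y - ∑ j, X j * Bhatn j)) - Bstar k) =
      (S * (Sᵀ * S)⁻¹ * Sᵀ) * E -
        (S * (Sᵀ * S)⁻¹ * Sᵀ) *
          ∑ j ∈ Finset.univ.erase k, X j * (Bhatn j - Bstar j) :=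
  stmt_12_general n q K p k X Bstar Bhatn E Y hY S hSX
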